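/- Let G be the exotic cube: the digraph with vertices {0,1,…,8} and edges 0→1, 0→2, 0→3, 0→4, 1→5, 1→8, 2→5, 2→6, 3→6, 3→7, 4→7, 4→8, 5→8, 6→8, 7→8. Then P = e_{0158} − e_{0258} + e_{0268} − e_{0368} + e_{0378} − e_{0478} lies in Ω_3(G;ℤ) and is a minimal 3-path whose supporting digraph is all of G; in particular |V(Supp(P))| = 9 > 8 = |V(I^{⊡3})|, so there is no digraph map f: I^{⊡3} → G with image equal to G, hence (P, Supp(P)) is not admissible. -/

import Mathlib

/-- The boundary operator on the free ℤ-module generated by elementary paths (encoded as lists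
of vertices): `∂ e_{i₀…i_n} = Σ_j (-1)^j e_{i₀…î_j…i_n}` for paths of length ≥ 1, and `∂ = 0`
on paths of length 0. -/
noncomputable def bdry (V : Type*) : (List V →₀ ℤ) →ₗ[ℤ] (List V →₀ ℤ) :=
  Finsupp.lsum ℤ fun l => LinearMap.toSpanSingleton ℤ _
    (if 2 ≤ l.length then
      ∑ j ∈ Finset.range l.length, (-1 : ℤ) ^ j • Finsupp.single (l.eraseIdx j) (1 : ℤ)
    else 0)

/-- `u` is a ℤ-linear combination of strongly regular allowed elementary `n`-paths in the
digraph with adjacency `adj` (allowed: consecutive vertices joined by an edge; strongly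
regular: all vertices pairwise distinct), i.e. `u ∈ A_n(G;ℤ)`. -/
def IsA {V : Type*} (adj : V → V → Prop) (n : ℕ) (u : List V →₀ ℤ) : Prop :=
  ∀ l ∈ u.support, l.length = n + 1 ∧ l.Chain' adj ∧ l.Nodup

/-- `u ∈ Ω_n(G;ℤ)`: `u ∈ A_n(G;ℤ)` and `∂u ∈ A_{n-1}(G;ℤ)`. -/
def IsOmega {V : Type*} (adj : V → V → Prop) (n : ℕ) (u : List V →₀ ℤ) : Prop :=
  IsA adj n u ∧ IsA adj (n - 1) (bdry V u)
/-- The width `w(P) = Σ_p |c_p|` of a path `P = Σ_p c_p e_p`. -/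
def width {V : Type*} (u : List V →₀ ℤ) : ℤ :=
  ∑ l ∈ u.support, |u l|

/-- `P' < P`: `P'` is a nonzero element of `Ω_n(G;ℤ)` with `|c_p − d_p| ≤ |c_p|` and
`|d_p| ≤ |c_p|` for every elementary path `p`, and strictly smaller width. -/
def Smaller {V : Type*} (adj : V → V → Prop) (n : ℕ) (u' u : List V →₀ ℤ) : Prop :=
  IsOmega adj n u' ∧ u' ≠ 0 ∧
    (∀ l, |u l - u' l| ≤ |u l| ∧ |u' l| ≤ |u l|) ∧ width u' < width u

/-- `P` is a minimal `n`-path: `P ∈ Ω_n(G;ℤ)` and no `P' ∈ Ω_n(G;ℤ)` is smaller than `P`. -/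
def MinimalPath {V : Type*} (adj : V → V → Prop) (n : ℕ) (u : List V →₀ ℤ) : Prop :=
  IsOmega adj n u ∧ ¬ ∃ u', Smaller adj n u' u
/-- The adjacency relation of the `n`-cube digraph `I^{⊡n}`: vertices are binary strings of
length `n`, with an edge `a → b` iff `b` is obtained from `a` by changing exactly one
coordinate from `0` (false) to `1` (true). -/
def cubeAdj {n : ℕ} (a b : Fin n → Bool) : Prop :=
  ∃ i, a i = false ∧ b i = true ∧ ∀ j, j ≠ i → a j = b j

/-- The standard `n`-path `ω_n = Σ_{α ∈ E_n} (-1)^{σ(α)} e_α` in the `n`-cube `I^{⊡n}`: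
allowed `n`-paths from `(0,…,0)` to `(1,…,1)` correspond to permutations `π` of the `n`
coordinates (flipping coordinate `π(k)` at step `k+1`), and the sign `(-1)^{σ(α)}` given by
the number of inversions is the sign of `π`. -/
noncomputable def stdOmega (n : ℕ) : List (Fin n → Bool) →₀ ℤ :=
  ∑ π : Equiv.Perm (Fin n),
    ((Equiv.Perm.sign π : ℤˣ) : ℤ) •
      Finsupp.single
        ((List.range (n + 1)).map fun k => fun i : Fin n => decide ((π⁻¹ i : Fin n).val < k))
        (1 : ℤ)
/-- `f` is a digraph map: every edge `v → w` satisfies `f v → f w` or `f v = f w`. -/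
def IsDigraphMap {V W : Type*} (adjV : V → V → Prop) (adjW : W → W → Prop)
    (f : V → W) : Prop :=
  ∀ a b, adjV a b → adjW (f a) (f b) ∨ f a = f b

/-- A digraph is acyclic if it contains no directed cycle `v₀ → v₁ → ⋯ → v_n → v₀`. -/
def Acyclic {V : Type*} (adj : V → V → Prop) : Prop :=
  ¬ ∃ (n : ℕ) (v : Fin (n + 1) → V),
      (∀ i : Fin n, adj (v i.castSucc) (v i.succ)) ∧ adj (v (Fin.last n)) (v 0)

open Classical

/-- The push-forward `f_*`: the ℤ-linear map sending an elementary path `e_{i₀…i_k}` to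
`e_{f(i₀)…f(i_k)}` when all the `f(i_j)` are pairwise distinct, and to `0` otherwise. -/
noncomputable def fstar {V W : Type*} (f : V → W) : (List V →₀ ℤ) →ₗ[ℤ] (List W →₀ ℤ) :=
  Finsupp.lsum ℤ fun l => LinearMap.toSpanSingleton ℤ _
    (if (l.map f).Nodup then Finsupp.single (l.map f) (1 : ℤ) else 0)

/-- The exotic cube: the digraph on `{0,…,8}` with edges `0→1, 0→2, 0→3, 0→4, 1→5, 1→8,
2→5, 2→6, 3→6, 3→7, 4→7, 4→8, 5→8, 6→8, 7→8`. -/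
def exoticAdj : Fin 9 → Fin 9 → Prop := fun a b =>
  (a, b) ∈ ({(0, 1), (0, 2), (0, 3), (0, 4), (1, 5), (1, 8), (2, 5), (2, 6), (3, 6), (3, 7),
      (4, 7), (4, 8), (5, 8), (6, 8), (7, 8)} : Set (Fin 9 × Fin 9))

/-- `P = e₀₁₅₈ − e₀₂₅₈ + e₀₂₆₈ − e₀₃₆₈ + e₀₃₇₈ − e₀₄₇₈` in the exotic cube. -/
noncomputable def exoticP : List (Fin 9) →₀ ℤ :=
  Finsupp.single [0, 1, 5, 8] (1 : ℤ) - Finsupp.single [0, 2, 5, 8] (1 : ℤ) +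
    Finsupp.single [0, 2, 6, 8] (1 : ℤ) - Finsupp.single [0, 3, 6, 8] (1 : ℤ) +
    Finsupp.single [0, 3, 7, 8] (1 : ℤ) - Finsupp.single [0, 4, 7, 8] (1 : ℤ)

/-!
In `∂P` the five faces `058, 028, 068, 038, 078`, which are not allowed in `G`, cancel in
adjacent pairs, so `P ∈ Ω₃(G)`. Conversely an element of `Ω₃(G)` supported on the six paths of
`P` must kill these five faces, which forces its six coefficients to alternate: it is a multiple
of `P`, and so `P` is minimal. Every edge of `G` lies on a path of `P` or on a face of `∂P`, so
`Supp(P) = G`, which has 9 vertices and hence is not the image of the 8-vertex cube `I^{⊡3}`.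
-/

section PathComplex

variable {V : Type*} {adj : V → V → Prop} {n : ℕ}

theorem bdry_single_four (a b c d : V) (k : ℤ) :
    bdry V (Finsupp.single [a, b, c, d] k) =
      Finsupp.single [b, c, d] k - Finsupp.single [a, c, d] k + Finsupp.single [a, b, d] k
        - Finsupp.single [a, b, c] k := by
  rw [bdry, Finsupp.lsum_single]
  simp [Finset.sum_range_succ, Finsupp.smul_single, sub_eq_add_neg, add_assoc]

theorem isA_single {l : List V} (hl : l.length = n + 1 ∧ l.IsChain adj ∧ l.Nodup) (k : ℤ) :
    IsA adj n (Finsupp.single l k) := fun _ hm =>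
  Finset.mem_singleton.1 (Finsupp.support_single_subset hm) ▸ hl

theorem IsA.add {u v : List V →₀ ℤ} (hu : IsA adj n u) (hv : IsA adj n v) :
    IsA adj n (u + v) := fun _ hl =>
  (Finset.mem_union.1 (Finsupp.support_add hl)).elim (hu _) (hv _)

theorem IsA.neg {u : List V →₀ ℤ} (hu : IsA adj n u) : IsA adj n (-u) := by
  simpa [IsA] using hu

theorem IsA.sub {u v : List V →₀ ℤ} (hu : IsA adj n u) (hv : IsA adj n v) :
    IsA adj n (u - v) := sub_eq_add_neg u v ▸ hu.add hv.neg

theorem IsA.isChain_of_apply_ne_zero {u : List V →₀ ℤ} (hu : IsA adj n u) {l : List V}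
    (hl : u l ≠ 0) : l.IsChain adj :=
  (hu l (Finsupp.mem_support_iff.2 hl)).2.1

theorem width_smul (k : ℤ) (u : List V →₀ ℤ) : width (k • u) = |k| * width u := by
  rcases eq_or_ne k 0 with rfl | hk
  · simp [width]
  simp [width, Finsupp.support_smul_eq hk, Finset.mul_sum, abs_mul]

theorem width_nonneg (u : List V →₀ ℤ) : 0 ≤ width u :=
  Finset.sum_nonneg fun _ _ => abs_nonneg _

theorem MinimalPath.of_forall_eq_smul {u : List V →₀ ℤ} (hu : IsOmega adj n u)
    (h : ∀ u', IsOmega adj n u' → (∀ l, u l = 0 → u' l = 0) → ∃ k : ℤ, u' = k • u) :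
    MinimalPath adj n u := by
  refine ⟨hu, fun ⟨u', hu', hne, hle, hlt⟩ => ?_⟩
  obtain ⟨k, rfl⟩ := h u' hu' fun l hl => abs_nonpos_iff.1 (by simpa [hl] using (hle l).2)
  have hk : k ≠ 0 := by rintro rfl; simp at hne
  rw [width_smul] at hlt
  nlinarith [width_nonneg u, Int.one_le_abs hk]

end PathComplex

theorem bdry_exoticP : bdry (Fin 9) exoticP =
    Finsupp.single [1, 5, 8] 1 + Finsupp.single [0, 1, 8] 1 - Finsupp.single [0, 1, 5] 1
      - Finsupp.single [2, 5, 8] 1 + Finsupp.single [0, 2, 5] 1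
      + Finsupp.single [2, 6, 8] 1 - Finsupp.single [0, 2, 6] 1
      - Finsupp.single [3, 6, 8] 1 + Finsupp.single [0, 3, 6] 1
      + Finsupp.single [3, 7, 8] 1 - Finsupp.single [0, 3, 7] 1
      - Finsupp.single [4, 7, 8] 1 - Finsupp.single [0, 4, 8] 1 + Finsupp.single [0, 4, 7] 1 := by
  simp only [exoticP, map_add, map_sub, bdry_single_four]
  abel

theorem isOmega_exoticP : IsOmega exoticAdj 3 exoticP := by
  refine ⟨?_, ?_⟩ <;> [rw [exoticP]; rw [bdry_exoticP]] <;>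
    repeat' first
      | with_reducible apply IsA.add | with_reducible apply IsA.sub
      | with_reducible apply isA_single
  all_goals exact ⟨rfl, by simp [exoticAdj], by decide⟩

def exoticCells : Finset (List (Fin 9)) :=
  {[0, 1, 5, 8], [0, 2, 5, 8], [0, 2, 6, 8], [0, 3, 6, 8], [0, 3, 7, 8], [0, 4, 7, 8]}

theorem exoticP_apply_eq_zero {l : List (Fin 9)} (hl : l ∉ exoticCells) : exoticP l = 0 := by
  simp only [exoticCells, Finset.mem_insert, Finset.mem_singleton, not_or] at hl
  simp [exoticP, hl]

theorem eq_smul_exoticP {u : List (Fin 9) →₀ ℤ} (hu : IsOmega exoticAdj 3 u)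
    (hsupp : ∀ l, exoticP l = 0 → u l = 0) : u = u [0, 1, 5, 8] • exoticP := by
  have hdecomp : u = ∑ p ∈ exoticCells, Finsupp.single p (u p) := by
    conv_lhs => rw [← Finsupp.sum_single u]
    refine Finsupp.sum_of_support_subset u (fun l hl => ?_) _ (by simp)
    by_contra hcell
    exact Finsupp.mem_support_iff.1 hl (hsupp l (exoticP_apply_eq_zero hcell))
  have hbdry_eq_zero (l : List (Fin 9)) (hl : ¬ l.IsChain exoticAdj) :
      (∑ p ∈ exoticCells, bdry _ (Finsupp.single p (u p))) l = 0 := by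
    rw [← map_sum, ← hdecomp]
    exact not_not.1 (mt hu.2.isChain_of_apply_ne_zero hl)
  have h1 : -u [0, 1, 5, 8] + -u [0, 2, 5, 8] = 0 := by
    simpa [exoticCells, bdry_single_four] using hbdry_eq_zero [0, 5, 8] (by simp [exoticAdj])
  have h2 : u [0, 2, 5, 8] + u [0, 2, 6, 8] = 0 := by
    simpa [exoticCells, bdry_single_four] using hbdry_eq_zero [0, 2, 8] (by simp [exoticAdj])
  have h3 : -u [0, 2, 6, 8] + -u [0, 3, 6, 8] = 0 := by
    simpa [exoticCells, bdry_single_four] using hbdry_eq_zero [0, 6, 8] (by simp [exoticAdj])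
  have h4 : u [0, 3, 6, 8] + u [0, 3, 7, 8] = 0 := by
    simpa [exoticCells, bdry_single_four] using hbdry_eq_zero [0, 3, 8] (by simp [exoticAdj])
  have h5 : -u [0, 3, 7, 8] + -u [0, 4, 7, 8] = 0 := by
    simpa [exoticCells, bdry_single_four] using hbdry_eq_zero [0, 7, 8] (by simp [exoticAdj])
  conv_lhs => rw [hdecomp]
  simp (disch := decide) only [exoticCells, Finset.sum_insert, Finset.sum_singleton]
  rw [show u [0, 2, 5, 8] = -u [0, 1, 5, 8] by omega,
    show u [0, 2, 6, 8] = u [0, 1, 5, 8] by omega, show u [0, 3, 6, 8] = -u [0, 1, 5, 8] by omega,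
    show u [0, 3, 7, 8] = u [0, 1, 5, 8] by omega, show u [0, 4, 7, 8] = -u [0, 1, 5, 8] by omega]
  simp only [exoticP, smul_add, smul_sub, Finsupp.smul_single, smul_eq_mul, mul_one,
    Finsupp.single_neg]
  abel

theorem minimalPath_exoticP : MinimalPath exoticAdj 3 exoticP :=
  .of_forall_eq_smul isOmega_exoticP fun _ hu hsupp => ⟨_, eq_smul_exoticP hu hsupp⟩

theorem exoticAdj_le_of_isOmega {adj' : Fin 9 → Fin 9 → Prop} (h : IsOmega adj' 3 exoticP)
    {a b : Fin 9} (hab : exoticAdj a b) : adj' a b := by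
  have hP {l} (hl : exoticP l ≠ 0) : l.IsChain adj' := h.1.isChain_of_apply_ne_zero hl
  have hB {l} (hl : bdry _ exoticP l ≠ 0) : l.IsChain adj' := h.2.isChain_of_apply_ne_zero hl
  obtain ⟨a01, a15, a58⟩ : adj' 0 1 ∧ adj' 1 5 ∧ adj' 5 8 := by
    simpa using hP (l := [0, 1, 5, 8]) (by simp [exoticP])
  obtain ⟨a02, a25, -⟩ : adj' 0 2 ∧ adj' 2 5 ∧ adj' 5 8 := by
    simpa using hP (l := [0, 2, 5, 8]) (by simp [exoticP])
  obtain ⟨-, a26, a68⟩ : adj' 0 2 ∧ adj' 2 6 ∧ adj' 6 8 := by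
    simpa using hP (l := [0, 2, 6, 8]) (by simp [exoticP])
  obtain ⟨a03, a36, -⟩ : adj' 0 3 ∧ adj' 3 6 ∧ adj' 6 8 := by
    simpa using hP (l := [0, 3, 6, 8]) (by simp [exoticP])
  obtain ⟨-, a37, a78⟩ : adj' 0 3 ∧ adj' 3 7 ∧ adj' 7 8 := by
    simpa using hP (l := [0, 3, 7, 8]) (by simp [exoticP])
  obtain ⟨a04, a47, -⟩ : adj' 0 4 ∧ adj' 4 7 ∧ adj' 7 8 := by
    simpa using hP (l := [0, 4, 7, 8]) (by simp [exoticP])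
  -- `1 → 8` and `4 → 8` lie on no path of `P`, only on the faces `018` and `048` of `∂P`.
  obtain ⟨-, a18⟩ : adj' 0 1 ∧ adj' 1 8 := by
    simpa using hB (l := [0, 1, 8]) (by simp [bdry_exoticP])
  obtain ⟨-, a48⟩ : adj' 0 4 ∧ adj' 4 8 := by
    simpa using hB (l := [0, 4, 8]) (by simp [bdry_exoticP])
  simp only [exoticAdj, Set.mem_insert_iff, Set.mem_singleton_iff, Prod.mk.injEq] at hab
  rcases hab with ⟨rfl, rfl⟩ | ⟨rfl, rfl⟩ | ⟨rfl, rfl⟩ | ⟨rfl, rfl⟩ | ⟨rfl, rfl⟩ | ⟨rfl, rfl⟩ |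
    ⟨rfl, rfl⟩ | ⟨rfl, rfl⟩ | ⟨rfl, rfl⟩ | ⟨rfl, rfl⟩ | ⟨rfl, rfl⟩ | ⟨rfl, rfl⟩ | ⟨rfl, rfl⟩ |
    ⟨rfl, rfl⟩ | ⟨rfl, rfl⟩ <;> assumption

/-- In the exotic cube `G`: `P = e₀₁₅₈ − e₀₂₅₈ + e₀₂₆₈ − e₀₃₆₈ + e₀₃₇₈ − e₀₄₇₈` lies in
`Ω₃(G;ℤ)` and is a minimal 3-path; its supporting digraph is all of `G` (no proper
sub-digraph carries `P`); there is no digraph map `f : I^{⊡3} → G` whose image contains all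
9 vertices (since `I^{⊡3}` has only 8); hence `(P, Supp(P))` is not admissible: no digraph
map `f : I^{⊡3} → G` has `f_*(ω₃) = cP` (`c ≠ 0`) with image digraph equal to
`Supp(P) = G`. -/
theorem exotic_cube_not_admissible :
    IsOmega exoticAdj 3 exoticP ∧
    MinimalPath exoticAdj 3 exoticP ∧
    (∀ adj' : Fin 9 → Fin 9 → Prop,
      (∀ a b, adj' a b → exoticAdj a b) → IsOmega adj' 3 exoticP → adj' = exoticAdj) ∧
    (¬ ∃ f : (Fin 3 → Bool) → Fin 9,
      IsDigraphMap cubeAdj exoticAdj f ∧ Set.range f = Set.univ) ∧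
    (¬ ∃ (f : (Fin 3 → Bool) → Fin 9) (c : ℤ),
      c ≠ 0 ∧ IsDigraphMap cubeAdj exoticAdj f ∧ fstar f (stdOmega 3) = c • exoticP ∧
      Set.range f = Set.univ ∧
      (∀ a b, exoticAdj a b ↔ ∃ x y, cubeAdj x y ∧ f x = a ∧ f y = b ∧ a ≠ b)) := by
  have range_ne_univ (f : (Fin 3 → Bool) → Fin 9) : Set.range f ≠ Set.univ := fun hf => by
    simpa using Fintype.card_le_of_surjective f (Set.range_eq_univ.1 hf)
  refine ⟨isOmega_exoticP, minimalPath_exoticP, fun adj' hle h => ?_,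
    fun ⟨f, _, hf⟩ => range_ne_univ f hf, fun ⟨f, _, _, _, _, hf, _⟩ => range_ne_univ f hf⟩
  ext a b
  exact ⟨hle a b, exoticAdj_le_of_isOmega h⟩
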